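/- arXiv:0810.0677 — 6 statements merged into one kernel-verified Lean document; each statement's English description precedes it below -/
import Mathlib

section
/- For every integer q ≥ 3 and β > 0, the second derivative of ψ(X) = log((q-1+e^{2β} e^X)/(q-2+e^{2β}+e^X)) at X = 0 is strictly positive. -/
/-!
Writing `a = q - 1`, `b = e^{2β}`, `c = q - 2 + e^{2β}`, we have `ψ(X) = log (a + b e^X) - log (c + e^X)`,
and `X ↦ log (a + b e^X)` has second derivative `a b e^X / (a + b e^X)²`. Since `a + b = c + 1`, this gives
`ψ''(0) = (a b - c) / (c + 1)² = (q - 2)(e^{2β} - 1) / (c + 1)²`, which is positive for `q ≥ 3` and `β > 0`.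
-/

open Real

section LogAffineExp

variable {a b c : ℝ}

lemma hasDerivAt_mul_exp_div_add_mul_exp (x : ℝ) (h : a + b * exp x ≠ 0) :
    HasDerivAt (fun X => b * exp X / (a + b * exp X)) (a * b * exp x / (a + b * exp x) ^ 2) x := by
  have hnum : HasDerivAt (fun X => b * exp X) (b * exp x) x := (hasDerivAt_exp x).const_mul b
  exact (hnum.div (hnum.const_add a) h).congr_deriv (by ring)

lemma deriv_log_add_mul_exp_div_add_exp (ha : 0 < a) (hb : 0 ≤ b) (hc : 0 ≤ c) :
    deriv (fun X => log ((a + b * exp X) / (c + exp X))) =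
      fun X => b * exp X / (a + b * exp X) - exp X / (c + exp X) := by
  funext x
  have hnum : 0 < a + b * exp x := by positivity
  have hden : 0 < c + exp x := by positivity
  have hlog : HasDerivAt (fun X => log (a + b * exp X) - log (c + exp X))
      (b * exp x / (a + b * exp x) - exp x / (c + exp x)) x :=
    (((hasDerivAt_exp x).const_mul b).const_add a |>.log hnum.ne').sub
      ((hasDerivAt_exp x).const_add c |>.log hden.ne')
  refine HasDerivAt.deriv (hlog.congr_of_eventuallyEq (Filter.Eventually.of_forall fun X => ?_))
  exact log_div (by positivity) (by positivity)

lemma deriv_deriv_log_add_mul_exp_div_add_exp (ha : 0 < a) (hb : 0 ≤ b) (hc : 0 ≤ c) (x : ℝ) :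
    deriv (deriv (fun X => log ((a + b * exp X) / (c + exp X)))) x =
      a * b * exp x / (a + b * exp x) ^ 2 - c * exp x / (c + exp x) ^ 2 := by
  rw [deriv_log_add_mul_exp_div_add_exp ha hb hc]
  have hden : HasDerivAt (fun X => exp X / (c + exp X)) (c * exp x / (c + exp x) ^ 2) x := by
    simpa using hasDerivAt_mul_exp_div_add_mul_exp (a := c) (b := 1) x (by positivity)
  exact ((hasDerivAt_mul_exp_div_add_mul_exp x (by positivity)).sub hden).deriv

end LogAffineExp

/-- For q ≥ 3 and β > 0 the second derivative of
ψ(X) = log((q-1+e^{2β} e^X)/(q-2+e^{2β}+e^X)) at X = 0 is strictly positive. -/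
theorem stmt2 (q : ℕ) (hq : 3 ≤ q) (β : ℝ) (hβ : 0 < β) :
    0 < deriv (deriv (fun X : ℝ =>
        Real.log (((q : ℝ) - 1 + Real.exp (2 * β) * Real.exp X) /
          ((q : ℝ) - 2 + Real.exp (2 * β) + Real.exp X)))) 0 := by
  have hq' : (3 : ℝ) ≤ q := by exact_mod_cast hq
  have hb : 1 < exp (2 * β) := one_lt_exp_iff.mpr (by positivity)
  rw [deriv_deriv_log_add_mul_exp_div_add_exp (by linarith) (by positivity) (by linarith)]
  simp only [exp_zero, mul_one]
  have hsum : (q : ℝ) - 1 + exp (2 * β) = (q : ℝ) - 2 + exp (2 * β) + 1 := by ring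
  have hnum : ((q : ℝ) - 1) * exp (2 * β) - ((q : ℝ) - 2 + exp (2 * β)) =
      ((q : ℝ) - 2) * (exp (2 * β) - 1) := by ring
  rw [hsum, div_sub_div_same, hnum]
  exact div_pos (mul_pos (by linarith) (by linarith)) (pow_pos (by linarith) 2)
end

section
/- Let q ≥ 2, β > 0, u(p) = log(1 + p(e^{2β} − 1)), and h(p₁,…,p_q) = q p₂ (u(p₂) − u(p₁)). Then the symmetrization satisfies (R h)(p₁,…,p_q) = (1/(q−1)) Σ_{i=1}^q (q p_i − 1) u(p_i) for every probability vector (p₁,…,p_q) with Σ p_i = 1. -/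
/-!
Since `π ↦ π * σ` permutes `Perm α`, the sum `∑ π, F (π a) (π b)` is the same for every pair of
distinct positions `(a, b)`; averaging over all `q (q - 1)` such pairs gives
`(R h)(p) = (1 / (q (q - 1))) ∑_{i ≠ j} q pⱼ (u(pⱼ) - u(pᵢ))`, and `∑ p = 1` collapses the double
sum to `q ∑ pⱼ u(pⱼ) - ∑ u(pᵢ)`.
-/

open Finset

namespace Equiv.Perm

variable {α : Type*}

theorem exists_apply_eq_and_apply_eq [DecidableEq α] {a b i j : α} (hab : a ≠ b) (hij : i ≠ j) :
    ∃ σ : Perm α, σ i = a ∧ σ j = b := by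
  have hja : swap i a j ≠ a := fun h =>
    hij.symm ((swap i a).injective (h.trans (swap_apply_left i a).symm))
  refine ⟨swap (swap i a j) b * swap i a, ?_, by simp⟩
  rw [mul_apply, swap_apply_left, swap_apply_of_ne_of_ne hja.symm hab]

variable [Fintype α] {M : Type*} [AddCommMonoid M]

theorem sum_apply_apply_eq_of_ne [DecidableEq α] (F : α → α → M) {a b i j : α} (hab : a ≠ b)
    (hij : i ≠ j) :
    ∑ π : Perm α, F (π a) (π b) = ∑ π : Perm α, F (π i) (π j) := by
  obtain ⟨σ, rfl, rfl⟩ := exists_apply_eq_and_apply_eq hab hij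
  exact Equiv.sum_comp (Equiv.mulRight σ) fun π => F (π i) (π j)

theorem sum_offDiag_apply_apply (π : Perm α) (F : α → α → M) :
    ∑ x ∈ univ.offDiag, F (π x.1) (π x.2) = ∑ x ∈ univ.offDiag, F x.1 x.2 :=
  Finset.sum_nbij' (Prod.map π π) (Prod.map π.symm π.symm) (by simp) (by simp) (by simp)
    (by simp) (fun _ _ => rfl)

theorem card_mul_sum_apply_apply [DecidableEq α] (F : α → α → M) {a b : α} (hab : a ≠ b) :
    (Fintype.card α * (Fintype.card α - 1)) • ∑ π : Perm α, F (π a) (π b)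
      = (Fintype.card α).factorial • ∑ x ∈ univ.offDiag, F x.1 x.2 := by
  have hcard : #(univ : Finset α).offDiag = Fintype.card α * (Fintype.card α - 1) := by
    rw [offDiag_card, card_univ, Nat.mul_sub_one]
  calc (Fintype.card α * (Fintype.card α - 1)) • ∑ π : Perm α, F (π a) (π b)
      = ∑ x ∈ univ.offDiag, ∑ π : Perm α, F (π x.1) (π x.2) := by
        rw [← hcard, ← sum_const]
        exact sum_congr rfl fun x hx =>
          sum_apply_apply_eq_of_ne F hab (mem_offDiag.mp hx).2.2
    _ = ∑ π : Perm α, ∑ x ∈ univ.offDiag, F x.1 x.2 := by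
        rw [sum_comm]
        exact sum_congr rfl fun π _ => sum_offDiag_apply_apply π F
    _ = (Fintype.card α).factorial • ∑ x ∈ univ.offDiag, F x.1 x.2 := by
        rw [sum_const, card_univ, Fintype.card_perm]

end Equiv.Perm

theorem Finset.sum_offDiag_eq_sum_sum {α M : Type*} [DecidableEq α] [AddCommMonoid M]
    (s : Finset α) (F : α → α → M) (hF : ∀ i ∈ s, F i i = 0) :
    ∑ x ∈ s.offDiag, F x.1 x.2 = ∑ i ∈ s, ∑ j ∈ s, F i j := by
  rw [← sum_product', ← diag_union_offDiag, sum_union (disjoint_diag_offDiag s),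
    sum_eq_zero (s := s.diag) fun x hx => (mem_diag.mp hx).2 ▸ hF x.1 (mem_diag.mp hx).1,
    zero_add]

theorem sum_sum_mul_sub_of_sum_eq_one {ι R : Type*} [Fintype ι] [CommRing R] (p u : ι → R)
    (hp : ∑ i, p i = 1) :
    ∑ i, ∑ j, p j * (u j - u i) = Fintype.card ι * ∑ j, p j * u j - ∑ i, u i := by
  simp only [mul_sub, sum_sub_distrib, ← sum_mul, hp, one_mul, sum_const, card_univ,
    nsmul_eq_mul]

/-- Symmetrization of h(p₁,…,p_q) = q p₂ (u(p₂) - u(p₁)) with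
u(p) = log(1+p(e^{2β}-1)): (R h)(p) = (1/(q-1)) Σᵢ (q pᵢ - 1) u(pᵢ). -/
theorem stmt6 (q : ℕ) (hq : 2 ≤ q) (β : ℝ) (p : Fin q → ℝ)
    (hsum : ∑ i, p i = 1) :
    (1 / (Nat.factorial q : ℝ)) *
      ∑ π : Equiv.Perm (Fin q),
        (q : ℝ) * p (π ⟨1, by omega⟩) *
          (Real.log (1 + p (π ⟨1, by omega⟩) * (Real.exp (2 * β) - 1)) -
           Real.log (1 + p (π ⟨0, by omega⟩) * (Real.exp (2 * β) - 1)))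
    = (1 / ((q : ℝ) - 1)) *
        ∑ i, ((q : ℝ) * p i - 1) * Real.log (1 + p i * (Real.exp (2 * β) - 1)) := by
  set u : Fin q → ℝ := fun i => Real.log (1 + p i * (Real.exp (2 * β) - 1))
  set F : Fin q → Fin q → ℝ := fun a j => q * p j * (u j - u a)
  have hq0 : (q : ℝ) ≠ 0 := by exact_mod_cast (by omega : q ≠ 0)
  have hq1 : (q : ℝ) - 1 ≠ 0 := by
    rw [sub_ne_zero]; exact_mod_cast (by omega : q ≠ 1)
  have hfac : (q.factorial : ℝ) ≠ 0 := by positivity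
  have hdouble : ∑ i, ∑ j, F i j = q * (q * ∑ j, p j * u j - ∑ i, u i) := by
    simp only [F, mul_assoc, ← mul_sum]
    rw [sum_sum_mul_sub_of_sum_eq_one p u hsum, Fintype.card_fin]
  have hsym : (q * (q - 1) : ℝ) * ∑ π : Equiv.Perm (Fin q), F (π ⟨0, by omega⟩) (π ⟨1, by omega⟩)
      = q.factorial * (q * (q * ∑ j, p j * u j - ∑ i, u i)) := by
    have h := Equiv.Perm.card_mul_sum_apply_apply F
      (a := ⟨0, by omega⟩) (b := ⟨1, by omega⟩) (by simp)
    rw [sum_offDiag_eq_sum_sum _ F (fun i _ => by simp [F]), hdouble, Fintype.card_fin] at h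
    simpa only [nsmul_eq_mul, Nat.cast_mul, Nat.cast_sub (by omega : 1 ≤ q), Nat.cast_one] using h
  have hright : ∑ i, ((q : ℝ) * p i - 1) * u i = q * ∑ j, p j * u j - ∑ i, u i := by
    simp only [sub_mul, one_mul, sum_sub_distrib, mul_assoc, ← mul_sum]
  change 1 / (q.factorial : ℝ) * ∑ π : Equiv.Perm (Fin q), F (π _) (π _) = 1 / ((q : ℝ) - 1) * _
  rw [hright]
  clear_value F u
  field_simp
  exact mul_left_cancel₀ hq0 (by linear_combination hsym)
end

section
/- For q ≥ 2 and β > 0, one has c̄(β,q) ≥ (e^{2β}−1)/(q−1+e^{2β}), where c̄(β,q) = sup over probability vectors p of [Σᵢ (q pᵢ − 1) log(1+(e^{2β}−1)pᵢ)] / [Σᵢ (q pᵢ − 1) log(q pᵢ)]. -/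
/-!
Along the segment `p_t = (1 - t) • uniform + t • δ i₀` both sums equal `(q - 1) t` times
`φ(p_t i₀) - φ(p_t j)` (`j ≠ i₀`), for `φ p = log (1 + λ p)` and `φ p = log (q p)` respectively.
These differences vanish at `t = 0` with derivatives `φ'(1/q)`, namely `qλ/(q + λ)` and `q`,
so the ratio tends to `λ/(q + λ)` as `t → 0⁺`, where `λ = e^{2β} - 1`.

Since `sSup` of a set of reals that is not bounded above is `0`, the ratio must also be bounded.
For `x = q pᵢ > 0` one has `(x - 1) log (1 + λx/q) ≤ (x - 1) (log x + log (1 + λ/q))`, and the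
right-hand side sums to `∑ (x - 1) log x` because `∑ (x - 1) = 0`. Coordinates with `pᵢ = 0`
(where `log 0 = 0`) each cost `log (1 + λ/q)`, and by Cauchy–Schwarz their number is at most
`q² ∑ (x - 1) log x`.
-/

open Real Finset Filter Topology

lemma sub_one_mul_log_nonneg {x : ℝ} (hx : 0 ≤ x) : 0 ≤ (x - 1) * log x := by
  rcases le_total x 1 with h | h
  · exact mul_nonneg_of_nonpos_of_nonpos (by linarith) (log_nonpos hx h)
  · exact mul_nonneg (by linarith) (log_nonneg h)

lemma sq_posPart_sub_one_le {x Q : ℝ} (hx : 0 ≤ x) (hxQ : x ≤ Q) :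
    (x - 1)⁺ ^ 2 ≤ Q * ((x - 1) * log x) := by
  rcases le_total x 1 with h | h
  · rw [posPart_eq_zero.2 (by linarith)]
    have := sub_one_mul_log_nonneg hx
    nlinarith
  · rw [posPart_eq_self.2 (by linarith)]
    have hx₀ : 0 < x := by linarith
    have hlog : x - 1 ≤ x * log x := by
      have := mul_le_mul_of_nonneg_left (one_sub_inv_le_log_of_pos hx₀) hx₀.le
      rwa [mul_sub, mul_one, mul_inv_cancel₀ hx₀.ne'] at this
    have hlogQ : x * log x ≤ Q * log x := mul_le_mul_of_nonneg_right hxQ (log_nonneg h)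
    nlinarith

lemma sub_one_mul_log_one_add_mul_le {x b : ℝ} (hx : 0 < x) (hb : 0 ≤ b) :
    (x - 1) * log (1 + b * x) ≤ (x - 1) * log x + (x - 1) * log (1 + b) := by
  rw [← mul_add, ← log_mul hx.ne' (by positivity)]
  rcases le_total x 1 with h | h
  · exact mul_le_mul_of_nonpos_left (log_le_log (by positivity) (by nlinarith)) (by linarith)
  · exact mul_le_mul_of_nonneg_left (log_le_log (by positivity) (by nlinarith)) (by linarith)

lemma tendsto_div_of_hasDerivAt {f g : ℝ → ℝ} {f' g' a : ℝ} (hf : HasDerivAt f f' a)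
    (hg : HasDerivAt g g' a) (hfa : f a = 0) (hga : g a = 0) (hg' : g' ≠ 0) :
    Tendsto (fun t => f t / g t) (𝓝[≠] a) (𝓝 (f' / g')) := by
  rw [hasDerivAt_iff_tendsto_slope] at hf hg
  refine (hf.div hg hg').congr' ?_
  filter_upwards [self_mem_nhdsWithin] with t ht
  rw [Pi.div_apply, slope_def_field, slope_def_field, hfa, hga, sub_zero, sub_zero,
    div_div_div_cancel_right₀ (sub_ne_zero.2 ht)]

section Simplex

variable {ι : Type*} [Fintype ι]

lemma card_filter_eq_zero_le_sum_posPart {x : ι → ℝ} (hsum : ∑ i, (x i - 1) = 0) :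
    (#{i | x i = 0} : ℝ) ≤ ∑ i, (x i - 1)⁺ := by
  have hpos_eq_neg : ∑ i, (x i - 1)⁺ = ∑ i, (x i - 1)⁻ := by
    rw [← sub_eq_zero, ← sum_sub_distrib]
    simpa only [posPart_sub_negPart] using hsum
  rw [hpos_eq_neg, ← sum_boole]
  refine sum_le_sum fun i _ => ?_
  split_ifs with h
  · simp [h]
  · exact negPart_nonneg _

lemma card_filter_eq_zero_le {x : ι → ℝ} (hx : ∀ i, 0 ≤ x i)
    (hsum : ∑ i, x i = Fintype.card ι) :
    (#{i | x i = 0} : ℝ) ≤ Fintype.card ι ^ 2 * ∑ i, (x i - 1) * log (x i) := by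
  set n : ℝ := (Fintype.card ι : ℝ)
  set Z : ℝ := (#{i | x i = 0} : ℝ)
  have hsum' : ∑ i, (x i - 1) = 0 := by simp [sum_sub_distrib, hsum, n]
  have hZ : Z ≤ Z ^ 2 := by
    rcases Nat.eq_zero_or_pos #{i | x i = 0} with h | h
    · simp [Z, h]
    · have : (1 : ℝ) ≤ Z := by simp only [Z]; exact_mod_cast h
      nlinarith
  have hxn : ∀ i, x i ≤ n := fun i => hsum ▸ single_le_sum (fun j _ => hx j) (mem_univ i)
  calc Z ≤ Z ^ 2 := hZ
    _ ≤ (∑ i, (x i - 1)⁺) ^ 2 :=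
        pow_le_pow_left₀ (by positivity) (card_filter_eq_zero_le_sum_posPart hsum') 2
    _ ≤ n * ∑ i, (x i - 1)⁺ ^ 2 := by simpa using sq_sum_le_card_mul_sum_sq (s := univ)
    _ ≤ n * ∑ i, n * ((x i - 1) * log (x i)) := by
        gcongr with i
        exact sq_posPart_sub_one_le (hx i) (hxn i)
    _ = n ^ 2 * ∑ i, (x i - 1) * log (x i) := by rw [← mul_sum]; ring

lemma sum_sub_one_mul_log_one_add_mul_le {x : ι → ℝ} (hx : ∀ i, 0 ≤ x i)
    (hsum : ∑ i, x i = Fintype.card ι) {b : ℝ} (hb : 0 ≤ b) :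
    ∑ i, (x i - 1) * log (1 + b * x i) ≤
      (1 + Fintype.card ι ^ 2 * log (1 + b)) * ∑ i, (x i - 1) * log (x i) := by
  set c := log (1 + b)
  have hsum' : ∑ i, (x i - 1) = 0 := by simp [sum_sub_distrib, hsum]
  have hterm : ∀ i, (x i - 1) * log (1 + b * x i) ≤
      (x i - 1) * log (x i) + c * (x i - 1) + c * if x i = 0 then 1 else 0 := by
    intro i
    split_ifs with h
    · simp [h]
    · rw [mul_zero, add_zero, mul_comm c]
      exact sub_one_mul_log_one_add_mul_le ((hx i).lt_of_ne' h) hb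
  calc ∑ i, (x i - 1) * log (1 + b * x i)
      ≤ ∑ i, ((x i - 1) * log (x i) + c * (x i - 1) + c * if x i = 0 then 1 else 0) :=
        sum_le_sum fun i _ => hterm i
    _ = ∑ i, (x i - 1) * log (x i) + c * #{i | x i = 0} := by
        rw [sum_add_distrib, sum_add_distrib, ← mul_sum, ← mul_sum, hsum', sum_boole]
        ring
    _ ≤ _ := by
        have := mul_le_mul_of_nonneg_left (card_filter_eq_zero_le hx hsum)
          (log_nonneg (by linarith) : 0 ≤ c)
        linarith

lemma sum_mul_log_div_sum_mul_log_le {p : ι → ℝ} (hp : ∀ i, 0 ≤ p i) (hp₁ : ∑ i, p i = 1)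
    {a : ℝ} (ha : 0 ≤ a) :
    (∑ i, (Fintype.card ι * p i - 1) * log (1 + a * p i)) /
        (∑ i, (Fintype.card ι * p i - 1) * log (Fintype.card ι * p i)) ≤
      1 + Fintype.card ι ^ 2 * log (1 + a / Fintype.card ι) := by
  rcases (Fintype.card ι).eq_zero_or_pos with hι | hι
  · simp [hι]
  have hn : (0 : ℝ) < Fintype.card ι := by exact_mod_cast hι
  have hx : ∀ i, 0 ≤ Fintype.card ι * p i := fun i => mul_nonneg hn.le (hp i)
  have hsum : ∑ i, Fintype.card ι * p i = (Fintype.card ι : ℝ) := by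
    rw [← mul_sum, hp₁, mul_one]
  have key := sum_sub_one_mul_log_one_add_mul_le hx hsum (div_nonneg ha hn.le)
  have hcancel : ∀ i, a / Fintype.card ι * (Fintype.card ι * p i) = a * p i := fun i => by
    field_simp
  simp only [hcancel] at key
  refine div_le_of_le_mul₀ (sum_nonneg fun i _ => sub_one_mul_log_nonneg (hx i)) ?_ key
  have : 0 ≤ log (1 + a / Fintype.card ι) := log_nonneg (by linarith [div_nonneg ha hn.le])
  positivity

variable [DecidableEq ι]

/-- The point `(1 - t) • uniform + t • δ i₀` of the simplex. -/
noncomputable def towardVertex (i₀ : ι) (t : ℝ) (i : ι) : ℝ :=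
  if i = i₀ then (1 + (Fintype.card ι - 1) * t) / Fintype.card ι else (1 - t) / Fintype.card ι

lemma sum_towardVertex_apply (i₀ : ι) (t : ℝ) (φ : ℝ → ℝ) :
    ∑ i, φ (towardVertex i₀ t i) = φ ((1 + (Fintype.card ι - 1) * t) / Fintype.card ι)
      + (Fintype.card ι - 1) * φ ((1 - t) / Fintype.card ι) := by
  rw [Fintype.sum_eq_add_sum_compl i₀]
  simp only [towardVertex, if_true]
  rw [sum_congr rfl fun i hi => by rw [if_neg (by simpa using hi)], sum_const, card_compl,
    card_singleton, nsmul_eq_mul, Nat.cast_sub (Fintype.card_pos_iff.2 ⟨i₀⟩), Nat.cast_one]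

lemma towardVertex_nonneg (i₀ : ι) {t : ℝ} (ht₀ : 0 ≤ t) (ht₁ : t ≤ 1) (i : ι) :
    0 ≤ towardVertex i₀ t i := by
  have : (1 : ℝ) ≤ Fintype.card ι := by exact_mod_cast Fintype.card_pos_iff.2 ⟨i₀⟩
  unfold towardVertex
  split_ifs <;> apply div_nonneg <;> nlinarith

lemma sum_towardVertex (i₀ : ι) (t : ℝ) : ∑ i, towardVertex i₀ t i = 1 := by
  have : (Fintype.card ι : ℝ) ≠ 0 := by exact_mod_cast (Fintype.card_pos_iff.2 ⟨i₀⟩).ne'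
  rw [show ∑ i, towardVertex i₀ t i = _ from sum_towardVertex_apply i₀ t id, id, id]
  field_simp
  ring

lemma sum_card_mul_towardVertex_sub_one_mul (i₀ : ι) (t : ℝ) (φ : ℝ → ℝ) :
    ∑ i, (Fintype.card ι * towardVertex i₀ t i - 1) * φ (towardVertex i₀ t i) =
      (Fintype.card ι - 1) * t * (φ ((1 + (Fintype.card ι - 1) * t) / Fintype.card ι)
        - φ ((1 - t) / Fintype.card ι)) := by
  have : (Fintype.card ι : ℝ) ≠ 0 := by exact_mod_cast (Fintype.card_pos_iff.2 ⟨i₀⟩).ne'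
  rw [sum_towardVertex_apply i₀ t fun p => (Fintype.card ι * p - 1) * φ p]
  field_simp
  ring

end Simplex

lemma hasDerivAt_sub_comp_towardVertex {φ : ℝ → ℝ} {d n : ℝ} (hn : n ≠ 0)
    (hφ : HasDerivAt φ d (1 / n)) :
    HasDerivAt (fun t => φ ((1 + (n - 1) * t) / n) - φ ((1 - t) / n)) d 0 := by
  have ha : HasDerivAt (fun t : ℝ => (1 + (n - 1) * t) / n) ((n - 1) / n) 0 := by
    simpa using (((hasDerivAt_id (0 : ℝ)).const_mul (n - 1)).const_add 1).div_const n
  have hb : HasDerivAt (fun t : ℝ => (1 - t) / n) (-1 / n) 0 := by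
    simpa using ((hasDerivAt_id (0 : ℝ)).const_sub 1).div_const n
  have hφa : HasDerivAt φ d ((1 + (n - 1) * 0) / n) := by simpa using hφ
  have hφb : HasDerivAt φ d ((1 - 0) / n) := by simpa using hφ
  exact ((hφa.comp 0 ha).sub (hφb.comp 0 hb)).congr_deriv (by field_simp; ring)

lemma hasDerivAt_log_mul_towardVertex_sub {n : ℝ} (hn : 0 < n) :
    HasDerivAt (fun t => log (n * ((1 + (n - 1) * t) / n)) - log (n * ((1 - t) / n))) n 0 :=
  hasDerivAt_sub_comp_towardVertex hn.ne' (φ := fun p => log (n * p)) <| by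
    simpa [hn.ne'] using ((hasDerivAt_id (1 / n)).const_mul n).log
      (by simp only [id]; positivity)

lemma tendsto_log_one_add_mul_towardVertex_div {n a : ℝ} (hn : 0 < n) (ha : 0 ≤ a) :
    Tendsto (fun t => (log (1 + a * ((1 + (n - 1) * t) / n)) - log (1 + a * ((1 - t) / n))) /
        (log (n * ((1 + (n - 1) * t) / n)) - log (n * ((1 - t) / n))))
      (𝓝[≠] 0) (𝓝 (a / (n + a))) := by
  have hN := hasDerivAt_sub_comp_towardVertex hn.ne' (φ := fun p => log (1 + a * p))
    (d := a / (1 + a * (1 / n))) <| by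
      simpa using (((hasDerivAt_id (1 / n)).const_mul a).const_add 1).log
        (by simp only [id]; positivity)
  convert tendsto_div_of_hasDerivAt hN (hasDerivAt_log_mul_towardVertex_sub hn)
    (by simp) (by simp) hn.ne' using 2
  field_simp

/-- Kesten–Stigum lower bound: c̄(β,q) ≥ (e^{2β}-1)/(q-1+e^{2β}), where c̄(β,q)
is the supremum over probability vectors (with nonvanishing denominator) of
[Σᵢ (q pᵢ - 1) log(1+(e^{2β}-1)pᵢ)] / [Σᵢ (q pᵢ - 1) log(q pᵢ)]. -/
theorem stmt11 (q : ℕ) (hq : 2 ≤ q) (β : ℝ) (hβ : 0 < β) :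
    (Real.exp (2 * β) - 1) / ((q : ℝ) - 1 + Real.exp (2 * β)) ≤
      sSup { r : ℝ | ∃ p : Fin q → ℝ, (∀ i, 0 ≤ p i) ∧ (∑ i, p i = 1) ∧
        (∑ i, ((q : ℝ) * p i - 1) * Real.log ((q : ℝ) * p i)) ≠ 0 ∧
        r = (∑ i, ((q : ℝ) * p i - 1) * Real.log (1 + (Real.exp (2 * β) - 1) * p i)) /
            (∑ i, ((q : ℝ) * p i - 1) * Real.log ((q : ℝ) * p i)) } := by
  set a := Real.exp (2 * β) - 1
  have ha : 0 < a := sub_pos.2 (one_lt_exp_iff.2 (by linarith))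
  have hq₀ : (0 : ℝ) < q := by positivity
  have hq₁ : (1 : ℝ) < q := by exact_mod_cast hq
  rw [show (q : ℝ) - 1 + exp (2 * β) = q + a by ring]
  refine le_of_tendsto ((tendsto_log_one_add_mul_towardVertex_div hq₀ ha.le).mono_left
    (nhdsGT_le_nhdsNE 0)) ?_
  filter_upwards [Ioo_mem_nhdsGT one_pos, ((hasDerivAt_log_mul_towardVertex_sub hq₀).eventually_ne
    hq₀.ne' (c := 0)).filter_mono (nhdsGT_le_nhdsNE 0)] with t ht hDt
  have hsum := fun φ => sum_card_mul_towardVertex_sub_one_mul (⟨0, by omega⟩ : Fin q) t φ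
  simp only [Fintype.card_fin] at hsum
  have ht' : ((q : ℝ) - 1) * t ≠ 0 := mul_ne_zero (by linarith) ht.1.ne'
  refine le_csSup ⟨1 + q ^ 2 * log (1 + a / q), ?_⟩ ⟨towardVertex ⟨0, by omega⟩ t,
    towardVertex_nonneg _ ht.1.le ht.2.le, sum_towardVertex _ t, ?_, ?_⟩
  · rintro r ⟨p, hp, hp₁, -, rfl⟩
    simpa using sum_mul_log_div_sum_mul_log_le hp hp₁ ha.le
  · rw [hsum fun p => log (q * p)]
    exact mul_ne_zero ht' hDt
  · rw [hsum fun p => log (1 + a * p), hsum fun p => log (q * p), mul_div_mul_left _ _ ht']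
end

section
/- For q = 2 and β > 0, c̄(β,2) = tanh(β); that is, for all x ∈ (−1/2, 1/2), x ≠ 0, log((1+λx)/(1−λx)) / log((1+2x)/(1−2x)) ≤ λ/2 = tanh(β), where λ = 2(e^{2β}−1)/(e^{2β}+1), and the supremum over x is λ/2, attained in the limit x → 0. -/
/-!
Since `log ((1 + t) / (1 - t)) = 2 artanh t`, the ratio is `artanh (λx) / artanh (2x)`. The
function `artanh` is odd, vanishes at `0` and is convex on `[0, 1)`, so `artanh t / t` increases
with `|t|`; as `0 < λ ≤ 2` this bounds the ratio by `λ / 2`, and `artanh' 0 = 1` gives the limit.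
-/

open Filter Set Topology

namespace Real

theorem tanh_eq_exp_two_mul (x : ℝ) : tanh x = (exp (2 * x) - 1) / (exp (2 * x) + 1) := by
  rw [tanh_eq, exp_neg, two_mul, exp_add]
  field_simp

theorem tanh_pos {x : ℝ} (hx : 0 < x) : 0 < tanh x := by
  rw [tanh_eq_sinh_div_cosh]
  exact div_pos (sinh_pos_iff.mpr hx) (cosh_pos x)

theorem artanh_neg_eq_neg_artanh (x : ℝ) : artanh (-x) = -artanh x := by
  rw [artanh, artanh, ← log_inv, ← sqrt_inv, inv_div, sub_neg_eq_add, ← sub_eq_add_neg]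

theorem log_one_add_div_one_sub_eq_two_mul_artanh {x : ℝ} (hx : x ∈ Icc (-1) 1) :
    log ((1 + x) / (1 - x)) = 2 * artanh x := by
  rw [artanh_eq_half_log hx]
  ring

theorem hasDerivAt_artanh {x : ℝ} (hx : x ∈ Ioo (-1) 1) : HasDerivAt artanh (1 - x ^ 2)⁻¹ x := by
  obtain ⟨hx₁, hx₂⟩ := hx
  have h₁ := ((hasDerivAt_id x).const_add 1).log (by simp; linarith)
  have h₂ := ((hasDerivAt_id x).const_sub 1).log (by simp; linarith)
  refine (((h₁.sub h₂).const_mul (1 / 2)).congr_deriv ?_).congr_of_eventuallyEq ?_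
  · have : 1 - x ^ 2 = (1 + x) * (1 - x) := by ring
    rw [this, id]
    field_simp [show 1 + x ≠ 0 by linarith, show 1 - x ≠ 0 by linarith]
    ring
  · filter_upwards [Ioo_mem_nhds hx₁ hx₂] with y hy
    rw [artanh_eq_half_log (Ioo_subset_Icc_self hy),
      log_div (by linarith [hy.1]) (by linarith [hy.2])]
    rfl

theorem convexOn_artanh : ConvexOn ℝ (Ico 0 1) artanh := by
  have hderiv : ∀ x ∈ Ico (0 : ℝ) 1, HasDerivAt artanh (1 - x ^ 2)⁻¹ x :=
    fun x hx => hasDerivAt_artanh ⟨by linarith [hx.1], hx.2⟩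
  refine MonotoneOn.convexOn_of_deriv (convex_Ico 0 1)
    (fun x hx => (hderiv x hx).continuousAt.continuousWithinAt)
    (fun x hx => (hderiv x (interior_subset hx)).differentiableAt.differentiableWithinAt) ?_
  rw [interior_Ico]
  intro x hx y hy hxy
  rw [(hderiv x (Ioo_subset_Ico_self hx)).deriv, (hderiv y (Ioo_subset_Ico_self hy)).deriv]
  have hy_sq : 0 < 1 - y ^ 2 := by nlinarith [hy.1, hy.2]
  gcongr
  exact hx.1.le

theorem artanh_div_le_artanh_div {s t : ℝ} (hs : 0 < s) (hst : s ≤ t) (ht : t < 1) :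
    artanh s / s ≤ artanh t / t := by
  have := convexOn_artanh.secant_mono (a := 0) ⟨le_rfl, by norm_num⟩ ⟨hs.le, hst.trans_lt ht⟩
    ⟨hs.le.trans hst, ht⟩ hs.ne' (hs.trans_le hst).ne' hst
  simpa [artanh_zero] using this

theorem artanh_mul_div_artanh_mul_le {a b x : ℝ} (ha : 0 < a) (hab : a ≤ b) (hx : x ≠ 0)
    (hbx : |b * x| < 1) : artanh (a * x) / artanh (b * x) ≤ a / b := by
  wlog hx_pos : 0 < x generalizing x
  · have := this (x := -x) (neg_ne_zero.mpr hx) (by rwa [mul_neg, abs_neg])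
      (by push Not at hx_pos; exact neg_pos.mpr (hx_pos.lt_of_ne hx))
    rwa [mul_neg, mul_neg, artanh_neg_eq_neg_artanh, artanh_neg_eq_neg_artanh, neg_div_neg_eq]
      at this
  have hb : 0 < b := ha.trans_le hab
  have hbx' : b * x < 1 := (le_abs_self _).trans_lt hbx
  have hmono := artanh_div_le_artanh_div (mul_pos ha hx_pos)
    (mul_le_mul_of_nonneg_right hab hx_pos.le) hbx'
  have hpos : 0 < artanh (b * x) := artanh_pos ⟨mul_pos hb hx_pos, hbx'⟩
  rw [div_le_div_iff₀ (mul_pos ha hx_pos) (mul_pos hb hx_pos)] at hmono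
  rw [div_le_div_iff₀ hpos hb]
  nlinarith

theorem tendsto_artanh_mul_div_artanh_mul (a : ℝ) {b : ℝ} (hb : b ≠ 0) :
    Tendsto (fun x => artanh (a * x) / artanh (b * x)) (𝓝[≠] 0) (𝓝 (a / b)) := by
  have slope_at_zero (c : ℝ) : Tendsto (fun x => x⁻¹ * artanh (c * x)) (𝓝[≠] 0) (𝓝 c) := by
    have h := ((hasDerivAt_artanh (x := c * id 0) (by simp)).comp 0
      ((hasDerivAt_id 0).const_mul c)).tendsto_slope_zero
    simpa [Function.comp_def, artanh_zero] using h
  refine ((slope_at_zero a).div (slope_at_zero b) hb).congr' ?_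
  filter_upwards [self_mem_nhdsWithin] with x hx
  exact mul_div_mul_left _ _ (inv_ne_zero hx)

theorem log_div_log_eq_artanh_div_artanh {a b x : ℝ} (ha : a * x ∈ Icc (-1) 1)
    (hb : b * x ∈ Icc (-1) 1) :
    log ((1 + a * x) / (1 - a * x)) / log ((1 + b * x) / (1 - b * x)) =
      artanh (a * x) / artanh (b * x) := by
  rw [log_one_add_div_one_sub_eq_two_mul_artanh ha, log_one_add_div_one_sub_eq_two_mul_artanh hb,
    mul_div_mul_left _ _ two_ne_zero]

end Real

/-- For q = 2, c̄(β,2) = tanh β: with λ = 2(e^{2β}-1)/(e^{2β}+1), for all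
x ∈ (−1/2,1/2), x ≠ 0, log((1+λx)/(1-λx))/log((1+2x)/(1-2x)) ≤ λ/2 = tanh β,
and the supremum λ/2 is attained in the limit x → 0. -/
theorem stmt12 (β : ℝ) (hβ : 0 < β) (lam : ℝ)
    (hlam : lam = 2 * (Real.exp (2 * β) - 1) / (Real.exp (2 * β) + 1)) :
    (∀ x : ℝ, x ∈ Set.Ioo (-(1 / 2) : ℝ) (1 / 2) → x ≠ 0 →
        Real.log ((1 + lam * x) / (1 - lam * x)) /
          Real.log ((1 + 2 * x) / (1 - 2 * x)) ≤ lam / 2) ∧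
    lam / 2 = Real.tanh β ∧
    Tendsto (fun x : ℝ =>
        Real.log ((1 + lam * x) / (1 - lam * x)) /
          Real.log ((1 + 2 * x) / (1 - 2 * x)))
      (nhdsWithin 0 (Set.Ioo (-(1 / 2) : ℝ) (1 / 2) \ {0})) (nhds (lam / 2)) := by
  have htanh : lam / 2 = Real.tanh β := by
    rw [hlam, Real.tanh_eq_exp_two_mul]
    ring
  have hlam_pos : 0 < lam := by linarith [Real.tanh_pos hβ]
  have hlam_le : lam ≤ 2 := by linarith [Real.tanh_lt_one β]
  have hratio : ∀ x ∈ Set.Ioo (-(1 / 2) : ℝ) (1 / 2),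
      Real.log ((1 + lam * x) / (1 - lam * x)) / Real.log ((1 + 2 * x) / (1 - 2 * x)) =
        Real.artanh (lam * x) / Real.artanh (2 * x) := by
    intro x ⟨hx₁, hx₂⟩
    have hlamx : |lam * x| ≤ 1 := by
      rw [abs_mul, abs_of_pos hlam_pos]
      nlinarith [abs_lt.mpr ⟨hx₁, hx₂⟩, abs_nonneg x]
    exact Real.log_div_log_eq_artanh_div_artanh (abs_le.mp hlamx) ⟨by linarith, by linarith⟩
  refine ⟨fun x hx hx0 => ?_, htanh, ?_⟩
  · rw [hratio x hx]
    refine Real.artanh_mul_div_artanh_mul_le hlam_pos hlam_le hx0 ?_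
    rw [abs_mul, abs_two]
    linarith [abs_lt.mpr hx]
  · refine ((Real.tendsto_artanh_mul_div_artanh_mul lam two_ne_zero).mono_left
      (nhdsWithin_mono 0 fun x hx => hx.2)).congr' ?_
    filter_upwards [self_mem_nhdsWithin] with x hx
    exact (hratio x hx.1).symm
end

section
/- Let λ ∈ (0, 2). The function x ↦ log((1+λx)/(1−λx)) / log((1+2x)/(1−2x)), defined on (−1/2,1/2) \ {0}, attains its supremum λ/2 only in the limit x → 0; equivalently, log((1+λx)/(1−λx)) ≤ (λ/2) log((1+2x)/(1−2x)) for all x ∈ [0, 1/2), with equality only at x = 0. -/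
/-!
Both sides are values of `L t = log (1 + t) - log (1 - t) = 2 ∑ t ^ (2k+1) / (2k+1)` at `t = λx`
and `t = 2x`. Writing `s = λ/2 ∈ (0,1)`, the claim is `L (s t) ≤ s L t`, and termwise
`s ^ (2k+1) ≤ s` with strict inequality from `k = 1` on, so the inequality is strict for `t > 0`.
-/

open Real

theorem log_one_add_mul_sub_log_one_sub_mul_lt {s t : ℝ} (hs0 : 0 < s) (hs1 : s < 1)
    (ht0 : 0 < t) (ht1 : t < 1) :
    log (1 + s * t) - log (1 - s * t) < s * (log (1 + t) - log (1 - t)) := by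
  have hst : |s * t| < 1 := by
    rw [abs_of_pos (mul_pos hs0 ht0)]
    nlinarith
  have hseries := (hasSum_log_sub_log_of_abs_lt_one (x := t) (by rwa [abs_of_pos ht0])).mul_left s
  refine hasSum_lt (i := 1) (fun k => ?_) ?_ (hasSum_log_sub_log_of_abs_lt_one hst) hseries
  · have hpow : s ^ (2 * k + 1) ≤ s := pow_le_of_le_one hs0.le hs1.le (by omega)
    have : 0 ≤ 2 * (1 / (2 * (k : ℝ) + 1)) * t ^ (2 * k + 1) := by positivity
    rw [mul_pow]
    nlinarith
  · have hpow : s ^ 3 < s := pow_lt_self_of_lt_one₀ hs0 hs1 (by norm_num)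
    have : 0 < 2 * (1 / (2 * ((1 : ℕ) : ℝ) + 1)) * t ^ 3 := by positivity
    norm_num [mul_pow] at this ⊢
    nlinarith

/-- For λ ∈ (0,2): log((1+λx)/(1-λx)) ≤ (λ/2) log((1+2x)/(1-2x)) for all
x ∈ [0,1/2), with equality only at x = 0. -/
theorem stmt13 (lam : ℝ) (hlam : lam ∈ Set.Ioo (0 : ℝ) 2) :
    ∀ x : ℝ, 0 ≤ x → x < 1 / 2 →
      Real.log ((1 + lam * x) / (1 - lam * x)) ≤
          (lam / 2) * Real.log ((1 + 2 * x) / (1 - 2 * x)) ∧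
        (Real.log ((1 + lam * x) / (1 - lam * x)) =
            (lam / 2) * Real.log ((1 + 2 * x) / (1 - 2 * x)) ↔ x = 0) := by
  intro x hx0 hx
  obtain ⟨hl0, hl2⟩ := hlam
  rcases hx0.eq_or_lt with rfl | hxpos
  · simp
  have hlt := log_one_add_mul_sub_log_one_sub_mul_lt (s := lam / 2) (t := 2 * x)
    (by positivity) (by linarith) (by positivity) (by linarith)
  rw [show lam / 2 * (2 * x) = lam * x by ring] at hlt
  have hlx : lam * x < 1 := by nlinarith
  rw [log_div (by positivity) (by linarith), log_div (by positivity) (by linarith)]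
  exact ⟨hlt.le, iff_of_false hlt.ne hxpos.ne'⟩
end

section
/- Fix β > 0 and λ_q = (e^{2β}−1)/(1+(1/q)(e^{2β}−1)). For each x ∈ (0, 1/(q(q−1))], the function q ↦ φ̄(q,λ_q)(x) = log((1+λ_q x)/(1−λ_q(q−1)x)) / log((1+qx)/(1−q(q−1)x)) is strictly decreasing in the real parameter q ≥ 2 (where defined). -/
/-!
Write `h_q(z) = log (1 + q z) - log (1 - q (q - 1) z)`. Then `φ̄(q, λ_q)(x) = h_q(t_q x) / h_q(x)`
with `t_q = b / (q + b) ∈ (0, 1)` decreasing in `q`, where `b = e^{2β} - 1`. Since `h_q` is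
increasing, replacing `t_{q₂}` by the larger `t_{q₁}` increases the numerator; it remains to see
that `q ↦ h_q(z) / h_q(z')` is nonincreasing for `z ≤ z'`, i.e. that `z ↦ ∂_q h_q(z) / h_q(z)` is
nondecreasing. Both `∂_q h_q` and `h_q` vanish at `z = 0`, so by the monotone form of L'Hôpital's
rule it suffices that the ratio of their `z`-derivatives, `(v / u + (2q - 1) u / v) / q²` with
`u = 1 + q z`, `v = 1 - q (q - 1) z`, is nondecreasing; it is, because `u / v ≥ 1` increases
with `z`.
-/

open Real Set

section MonotoneLHopital

variable {f g f' g' : ℝ → ℝ} {a b : ℝ}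

theorem monotoneOn_div_of_monotoneOn_deriv_div
    (hf : ∀ x ∈ Icc a b, HasDerivAt f (f' x) x) (hg : ∀ x ∈ Icc a b, HasDerivAt g (g' x) x)
    (hfa : f a = 0) (hga : g a = 0) (hg' : ∀ x ∈ Icc a b, 0 < g' x)
    (hρ : MonotoneOn (fun x => f' x / g' x) (Icc a b)) :
    MonotoneOn (fun x => f x / g x) (Ioc a b) := by
  have hg_mono : StrictMonoOn g (Icc a b) :=
    strictMonoOn_of_hasDerivWithinAt_pos (convex_Icc a b)
      (fun x hx => (hg x hx).continuousAt.continuousWithinAt)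
      (fun x hx => (hg x (interior_subset hx)).hasDerivWithinAt)
      (fun x hx => hg' x (interior_subset hx))
  have cauchy : ∀ x ∈ Icc a b, ∀ y ∈ Icc a b, x < y →
      ∃ c ∈ Icc a b, x < c ∧ c < y ∧ f y - f x = (g y - g x) * (f' c / g' c) := by
    intro x hx y hy hxy
    have hsub : Icc x y ⊆ Icc a b := Icc_subset_Icc hx.1 hy.2
    obtain ⟨c, hc, h⟩ := exists_ratio_hasDerivAt_eq_ratio_slope f f' hxy
      (fun z hz => (hf z (hsub hz)).continuousAt.continuousWithinAt)
      (fun z hz => hf z (hsub (Ioo_subset_Icc_self hz))) g g'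
      (fun z hz => (hg z (hsub hz)).continuousAt.continuousWithinAt)
      (fun z hz => hg z (hsub (Ioo_subset_Icc_self hz)))
    have hc' := hsub (Ioo_subset_Icc_self hc)
    refine ⟨c, hc', hc.1, hc.2, ?_⟩
    rw [mul_div, eq_div_iff (hg' c hc').ne', h]
  have ratio_le : ∀ x ∈ Ioc a b, 0 < g x ∧ f x / g x ≤ f' x / g' x := by
    intro x hx
    have ha : a ∈ Icc a b := ⟨le_rfl, hx.1.le.trans hx.2⟩
    have hx' := Ioc_subset_Icc_self hx
    obtain ⟨c, hc, hac, hcx, h⟩ := cauchy a ha x hx' hx.1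
    have hgx : 0 < g x := hga ▸ hg_mono ha hx' hx.1
    rw [hfa, hga, sub_zero, sub_zero] at h
    rw [h, mul_div_cancel_left₀ _ hgx.ne']
    exact ⟨hgx, hρ hc hx' hcx.le⟩
  intro x hx y hy hxy
  obtain rfl | hxy := hxy.eq_or_lt
  · rfl
  have hx' := Ioc_subset_Icc_self hx
  obtain ⟨c, hc, hxc, -, h⟩ := cauchy x hx' y (Ioc_subset_Icc_self hy) hxy
  obtain ⟨hgx, hx_le⟩ := ratio_le x hx
  have hgxy : g x < g y := hg_mono hx' (Ioc_subset_Icc_self hy) hxy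
  -- with `ρ = f' / g'`: `f x / g x ≤ ρ x ≤ ρ c` and `f y = f x + (g y - g x) ρ c`
  have hfx : f x ≤ f' c / g' c * g x := (div_le_iff₀ hgx).1 (hx_le.trans (hρ hx' hc hxc.le))
  rw [div_le_div_iff₀ hgx (hgx.trans hgxy)]
  nlinarith [mul_nonneg (sub_nonneg.2 hgxy.le) (sub_nonneg.2 hfx)]

end MonotoneLHopital

namespace Potts

noncomputable def logRatio (q z : ℝ) : ℝ := log (1 + q * z) - log (1 - q * (q - 1) * z)

noncomputable def dqLogRatio (q z : ℝ) : ℝ :=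
  z / (1 + q * z) + (2 * q - 1) * z / (1 - q * (q - 1) * z)

noncomputable def dzdqLogRatio (q z : ℝ) : ℝ :=
  1 / (1 + q * z) ^ 2 + (2 * q - 1) / (1 - q * (q - 1) * z) ^ 2

variable {q z w : ℝ}

lemma one_sub_mul_pos_of_le_right (hq : 1 ≤ q) (hzw : z ≤ w) (hw : 0 < 1 - q * (q - 1) * w) :
    0 < 1 - q * (q - 1) * z := by
  nlinarith [mul_le_mul_of_nonneg_left hzw (by nlinarith : 0 ≤ q * (q - 1))]

lemma one_sub_mul_pos_of_le_left {Q : ℝ} (hq : 1 ≤ q) (hqQ : q ≤ Q) (hz : 0 ≤ z)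
    (hQ : 0 < 1 - Q * (Q - 1) * z) : 0 < 1 - q * (q - 1) * z := by
  nlinarith [mul_le_mul_of_nonneg_right (by nlinarith : q * (q - 1) ≤ Q * (Q - 1)) hz]

lemma logRatio_lt_logRatio (hq : 1 ≤ q) (hz : 0 ≤ z) (hzw : z < w)
    (hw : 0 < 1 - q * (q - 1) * w) : logRatio q z < logRatio q w := by
  have hqq : 0 ≤ q * (q - 1) := by nlinarith
  have h₁ : log (1 + q * z) < log (1 + q * w) :=
    log_lt_log (by positivity) (by nlinarith)
  have h₂ : log (1 - q * (q - 1) * w) ≤ log (1 - q * (q - 1) * z) :=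
    log_le_log hw (by nlinarith [mul_le_mul_of_nonneg_left hzw.le hqq])
  unfold logRatio
  linarith

lemma logRatio_zero : logRatio q 0 = 0 := by simp [logRatio]

lemma logRatio_pos (hq : 1 ≤ q) (hz : 0 < z) (hv : 0 < 1 - q * (q - 1) * z) :
    0 < logRatio q z :=
  logRatio_zero (q := q) ▸ logRatio_lt_logRatio hq le_rfl hz hv

lemma hasDerivAt_logRatio (hu : 0 < 1 + q * z) (hv : 0 < 1 - q * (q - 1) * z) :
    HasDerivAt (logRatio q) (q ^ 2 / ((1 + q * z) * (1 - q * (q - 1) * z))) z := by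
  -- `q / u + q (q - 1) / v = q ^ 2 / (u v)` since `v + (q - 1) u = q`
  have hu' : HasDerivAt (fun z => 1 + q * z) q z := by
    simpa using ((hasDerivAt_id z).const_mul q).const_add 1
  have hv' : HasDerivAt (fun z => 1 - q * (q - 1) * z) (-(q * (q - 1))) z := by
    simpa using ((hasDerivAt_id z).const_mul (q * (q - 1))).const_sub 1
  refine ((hu'.log hu.ne').sub (hv'.log hv.ne')).congr_deriv ?_
  rw [div_sub_div _ _ hu.ne' hv.ne']
  congr 1
  ring

lemma hasDerivAt_logRatio_left (hu : 0 < 1 + q * z) (hv : 0 < 1 - q * (q - 1) * z) :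
    HasDerivAt (fun q => logRatio q z) (dqLogRatio q z) q := by
  have hu' : HasDerivAt (fun q => 1 + q * z) z q := by
    simpa using ((hasDerivAt_id q).mul_const z).const_add 1
  have hv' : HasDerivAt (fun q => 1 - q * (q - 1) * z) (-((2 * q - 1) * z)) q := by
    refine ((((hasDerivAt_id q).mul ((hasDerivAt_id q).sub_const 1)).mul_const z).const_sub
      1).congr_deriv ?_
    simp only [id]
    ring
  refine ((hu'.log hu.ne').sub (hv'.log hv.ne')).congr_deriv ?_
  unfold dqLogRatio
  field_simp
  ring

lemma hasDerivAt_dqLogRatio (hu : 0 < 1 + q * z) (hv : 0 < 1 - q * (q - 1) * z) :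
    HasDerivAt (dqLogRatio q) (dzdqLogRatio q z) z := by
  have hu' : HasDerivAt (fun z => 1 + q * z) q z := by
    simpa using ((hasDerivAt_id z).const_mul q).const_add 1
  have hv' : HasDerivAt (fun z => 1 - q * (q - 1) * z) (-(q * (q - 1))) z := by
    simpa using ((hasDerivAt_id z).const_mul (q * (q - 1))).const_sub 1
  refine (((hasDerivAt_id z).div hu' hu.ne').add
    (((hasDerivAt_id z).const_mul (2 * q - 1)).div hv' hv.ne')).congr_deriv ?_
  unfold dzdqLogRatio
  simp only [id]
  field_simp
  ring

lemma monotoneOn_inv_add_mul {c : ℝ} (hc : 1 ≤ c) :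
    MonotoneOn (fun r => r⁻¹ + c * r) (Ici 1) := by
  intro r hr s hs hrs
  have hr0 : 0 < r := zero_lt_one.trans_le hr
  have hs0 : 0 < s := hr0.trans_le hrs
  -- `r⁻¹ - s⁻¹ = (s - r) / (r s) ≤ s - r ≤ c (s - r)`
  have : r⁻¹ - s⁻¹ ≤ s - r := by
    rw [inv_sub_inv hr0.ne' hs0.ne', div_le_iff₀ (by positivity)]
    nlinarith [mul_le_mul hr hs zero_le_one hr0.le, sub_nonneg.2 hrs]
  show r⁻¹ + c * r ≤ s⁻¹ + c * s
  nlinarith [sub_nonneg.2 hrs]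

lemma dzdqLogRatio_div_eq (hq : q ≠ 0) (hu : 1 + q * z ≠ 0) (hv : 1 - q * (q - 1) * z ≠ 0) :
    dzdqLogRatio q z / (q ^ 2 / ((1 + q * z) * (1 - q * (q - 1) * z))) =
      (((1 + q * z) / (1 - q * (q - 1) * z))⁻¹
        + (2 * q - 1) * ((1 + q * z) / (1 - q * (q - 1) * z))) / q ^ 2 := by
  unfold dzdqLogRatio
  generalize 1 + q * z = u at hu ⊢
  generalize 1 - q * (q - 1) * z = v at hv ⊢
  rw [inv_div]
  field_simp

lemma monotoneOn_dzdqLogRatio_div {Z : ℝ} (hq : 1 ≤ q) (hZ : 0 < 1 - q * (q - 1) * Z) :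
    MonotoneOn (fun z => dzdqLogRatio q z / (q ^ 2 / ((1 + q * z) * (1 - q * (q - 1) * z))))
      (Icc 0 Z) := by
  have hv : ∀ z ∈ Icc 0 Z, 0 < 1 - q * (q - 1) * z := fun z hz =>
    one_sub_mul_pos_of_le_right hq hz.2 hZ
  have hqq : 0 ≤ q * (q - 1) := by nlinarith
  set r : ℝ → ℝ := fun z => (1 + q * z) / (1 - q * (q - 1) * z)
  have hr_mono : MonotoneOn r (Icc 0 Z) := fun s hs z hz hsz =>
    div_le_div₀ (by nlinarith [hz.1]) (by nlinarith) (hv z hz)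
      (by nlinarith [mul_le_mul_of_nonneg_left hsz hqq])
  have hr_ge : MapsTo r (Icc 0 Z) (Ici 1) := fun z hz =>
    (one_le_div (hv z hz)).2 (by nlinarith [hz.1, mul_nonneg hqq hz.1])
  have hcomp := (monotoneOn_inv_add_mul (by linarith : 1 ≤ 2 * q - 1)).comp hr_mono hr_ge
  intro s hs z hz hsz
  dsimp only
  rw [dzdqLogRatio_div_eq (by positivity) (by nlinarith [hs.1]) (hv s hs).ne',
    dzdqLogRatio_div_eq (by positivity) (by nlinarith [hz.1]) (hv z hz).ne']
  exact div_le_div_of_nonneg_right (hcomp hs hz hsz) (by positivity)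

lemma monotoneOn_dqLogRatio_div_logRatio {Z : ℝ} (hq : 1 ≤ q) (hZ : 0 < 1 - q * (q - 1) * Z) :
    MonotoneOn (fun z => dqLogRatio q z / logRatio q z) (Ioc 0 Z) := by
  have hu : ∀ z ∈ Icc 0 Z, 0 < 1 + q * z := fun z hz => by nlinarith [hz.1]
  have hv : ∀ z ∈ Icc 0 Z, 0 < 1 - q * (q - 1) * z := fun z hz =>
    one_sub_mul_pos_of_le_right hq hz.2 hZ
  refine monotoneOn_div_of_monotoneOn_deriv_div
    (fun z hz => hasDerivAt_dqLogRatio (hu z hz) (hv z hz))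
    (fun z hz => hasDerivAt_logRatio (hu z hz) (hv z hz))
    (by simp [dqLogRatio]) logRatio_zero
    (fun z hz => by have := hu z hz; have := hv z hz; positivity)
    (monotoneOn_dzdqLogRatio_div hq hZ)

lemma monotoneOn_logRatio_div_logRatio {Q : ℝ} (hz : 0 < z) (hzw : z ≤ w)
    (hQ : 0 < 1 - Q * (Q - 1) * w) :
    MonotoneOn (fun q => logRatio q w / logRatio q z) (Icc 1 Q) := by
  have hv : ∀ q ∈ Icc 1 Q, 0 < 1 - q * (q - 1) * w := fun q hq =>
    one_sub_mul_pos_of_le_left hq.1 hq.2 (hz.le.trans hzw) hQ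
  have hd : ∀ q ∈ Icc 1 Q, HasDerivAt (fun q => logRatio q w / logRatio q z)
      ((dqLogRatio q w * logRatio q z - logRatio q w * dqLogRatio q z) / logRatio q z ^ 2) q :=
    fun q hq => (hasDerivAt_logRatio_left (by nlinarith [hq.1]) (hv q hq)).div
      (hasDerivAt_logRatio_left (by nlinarith [hq.1])
        (one_sub_mul_pos_of_le_right hq.1 hzw (hv q hq)))
      (logRatio_pos hq.1 hz (one_sub_mul_pos_of_le_right hq.1 hzw (hv q hq))).ne'
  refine monotoneOn_of_hasDerivWithinAt_nonneg (convex_Icc 1 Q)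
    (fun q hq => (hd q hq).continuousAt.continuousWithinAt)
    (fun q hq => (hd q (interior_subset hq)).hasDerivWithinAt) fun q hq => ?_
  have hq := interior_subset hq
  have hvz := one_sub_mul_pos_of_le_right hq.1 hzw (hv q hq)
  have hmono := monotoneOn_dqLogRatio_div_logRatio hq.1 (hv q hq) ⟨hz, hzw⟩
    ⟨hz.trans_le hzw, le_rfl⟩ hzw
  rw [div_le_div_iff₀ (logRatio_pos hq.1 hz hvz) (logRatio_pos hq.1 (hz.trans_le hzw) (hv q hq))]
    at hmono
  exact div_nonneg (by linarith) (sq_nonneg _)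

/-- `φ̄(q, λ_q)(x)` written with `b = e^{2β} - 1`, for which `λ_q = q b / (q + b)`. -/
noncomputable def phiBar (b q x : ℝ) : ℝ := logRatio q (b / (q + b) * x) / logRatio q x

variable {b x : ℝ}

lemma div_add_mul_mem_Ioo (hb : 0 < b) (hq : 0 < q) (hx : 0 < x) :
    b / (q + b) * x ∈ Ioo 0 x := by
  have ht : b / (q + b) < 1 := (div_lt_one (by linarith)).2 (by linarith)
  exact ⟨by positivity, mul_lt_of_lt_one_left hx ht⟩

lemma phiBar_pos (hb : 0 < b) (hq : 1 ≤ q) (hx : 0 < x) (hv : 0 < 1 - q * (q - 1) * x) :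
    0 < phiBar b q x := by
  have ht := div_add_mul_mem_Ioo hb (by linarith : 0 < q) hx
  exact div_pos (logRatio_pos hq ht.1 (one_sub_mul_pos_of_le_right hq ht.2.le hv))
    (logRatio_pos hq hx hv)

lemma phiBar_lt_phiBar {q₁ q₂ : ℝ} (hb : 0 < b) (hq₁ : 1 ≤ q₁) (h12 : q₁ < q₂) (hx : 0 < x)
    (hv : 0 < 1 - q₂ * (q₂ - 1) * x) : phiBar b q₂ x < phiBar b q₁ x := by
  have hq₂ : 1 ≤ q₂ := hq₁.trans h12.le
  have ht₁ := div_add_mul_mem_Ioo hb (by linarith : 0 < q₁) hx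
  have ht₂₁ : b / (q₂ + b) * x < b / (q₁ + b) * x :=
    mul_lt_mul_of_pos_right (div_lt_div_of_pos_left hb (by linarith) (by linarith)) hx
  have hmono := monotoneOn_logRatio_div_logRatio ht₁.1 ht₁.2.le hv ⟨hq₁, h12.le⟩ ⟨hq₂, le_rfl⟩
    h12.le
  have hv₁ := one_sub_mul_pos_of_le_left hq₁ h12.le hx.le hv
  have hpos : 0 < logRatio q₁ x / logRatio q₁ (b / (q₁ + b) * x) :=
    div_pos (logRatio_pos hq₁ hx hv₁)
      (logRatio_pos hq₁ ht₁.1 (one_sub_mul_pos_of_le_right hq₁ ht₁.2.le hv₁))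
  calc phiBar b q₂ x < logRatio q₂ (b / (q₁ + b) * x) / logRatio q₂ x :=
        div_lt_div_of_pos_right
          (logRatio_lt_logRatio hq₂ (div_add_mul_mem_Ioo hb (by linarith) hx).1.le ht₂₁
            (one_sub_mul_pos_of_le_right hq₂ ht₁.2.le hv))
          (logRatio_pos hq₂ hx hv)
    _ ≤ phiBar b q₁ x := by
        simpa only [one_div_div, phiBar] using one_div_le_one_div_of_le hpos hmono

lemma log_div_eq_phiBar (hb : 0 < b) (hq : 1 ≤ q) (hx : 0 < x) (hv : 0 < 1 - q * (q - 1) * x) :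
    log ((1 + b / (1 + 1 / q * b) * x) / (1 - b / (1 + 1 / q * b) * (q - 1) * x)) /
      log ((1 + q * x) / (1 - q * (q - 1) * x)) = phiBar b q x := by
  have ht := div_add_mul_mem_Ioo hb (by linarith : 0 < q) hx
  have hlam : b / (1 + 1 / q * b) = q * (b / (q + b)) := by
    field_simp
  rw [hlam, mul_assoc q, show q * (b / (q + b)) * (q - 1) * x = q * (q - 1) * (b / (q + b) * x) by
    ring, log_div (by nlinarith [ht.1]) (one_sub_mul_pos_of_le_right hq ht.2.le hv).ne',
    log_div (by nlinarith) hv.ne']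
  rfl

end Potts

open Potts in
/-- For fixed β > 0 and x > 0 in the common domain, the map
q ↦ φ̄(q,λ_q)(x) = log((1+λ_q x)/(1-λ_q(q-1)x)) / log((1+qx)/(1-q(q-1)x)),
with λ_q = (e^{2β}-1)/(1+(1/q)(e^{2β}-1)), is strictly decreasing in the real
parameter q ≥ 2. -/
theorem stmt14 (β : ℝ) (hβ : 0 < β) (q₁ q₂ : ℝ) (hq₁ : 2 ≤ q₁) (h12 : q₁ < q₂)
    (x : ℝ) (hx0 : 0 < x) (hx : x ≤ 1 / (q₂ * (q₂ - 1))) :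
    Real.log ((1 + ((Real.exp (2 * β) - 1) / (1 + (1 / q₂) * (Real.exp (2 * β) - 1))) * x) /
        (1 - ((Real.exp (2 * β) - 1) / (1 + (1 / q₂) * (Real.exp (2 * β) - 1))) * (q₂ - 1) * x)) /
      Real.log ((1 + q₂ * x) / (1 - q₂ * (q₂ - 1) * x))
    <
    Real.log ((1 + ((Real.exp (2 * β) - 1) / (1 + (1 / q₁) * (Real.exp (2 * β) - 1))) * x) /
        (1 - ((Real.exp (2 * β) - 1) / (1 + (1 / q₁) * (Real.exp (2 * β) - 1))) * (q₁ - 1) * x)) /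
      Real.log ((1 + q₁ * x) / (1 - q₁ * (q₁ - 1) * x)) := by
  have hb : 0 < Real.exp (2 * β) - 1 := sub_pos.2 (Real.one_lt_exp_iff.2 (by positivity))
  have hq₁' : 1 ≤ q₁ := by linarith
  have hx' : q₂ * (q₂ - 1) * x ≤ 1 := by
    rwa [le_div_iff₀ (by nlinarith), mul_comm] at hx
  have hv₁ : 0 < 1 - q₁ * (q₁ - 1) * x := by
    nlinarith [mul_lt_mul_of_pos_right (by nlinarith : q₁ * (q₁ - 1) < q₂ * (q₂ - 1)) hx0]
  rw [log_div_eq_phiBar hb hq₁' hx0 hv₁]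
  obtain hlt | heq := hx'.lt_or_eq
  · rw [log_div_eq_phiBar hb (by linarith) hx0 (by linarith)]
    exact phiBar_lt_phiBar hb hq₁' h12 hx0 (by linarith)
  · -- at `x = 1 / (q₂ (q₂ - 1))` the left side is `log _ / log 0 = 0` in Lean
    rw [heq, sub_self, div_zero, log_zero, div_zero]
    exact phiBar_pos hb hq₁' hx0 hv₁
end
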